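/- For every x ∈ Ω ∩ C, every (y,z) ∈ dom(g*) × dom(h₂*), and c_x = 1/g(x), it holds that F(x) = F̃(x, c_x) ≤ Q(x, y, z, c_x), with equality F(x) = Q(x, y, z, c_x) whenever (y,z) ∈ ∂g(x) × ∂h₂(x). -/

import Mathlib

/-!
For `x ∈ Ω ∩ C` and any `c`,
`Q(x,y,z,c) - F̃(x,c) = c² f(x) (g*(y) + g(x) - ⟨x,y⟩) + (h₂*(z) + h₂(x) - ⟨x,z⟩)`.
Both brackets are nonnegative by the Fenchel–Young inequality (and `f ≥ 0`), and they vanish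
exactly when `y ∈ ∂g(x)`, `z ∈ ∂h₂(x)`. The identity `F(x) = F̃(x, 1/g(x))` is plain algebra.
-/

open Filter Topology Set
open scoped Classical

noncomputable section

/-- `En n` is the Euclidean space `ℝⁿ`. -/
abbrev En (n : ℕ) := EuclideanSpace ℝ (Fin n)

variable {n : ℕ}

/-- `Ω := {x : g x ≠ 0}`. -/
def Omeg (g : En n → ℝ) : Set (En n) := {x | g x ≠ 0}

/-- The extended objective `F` of the fractional program (P), with `h = h₁ - h₂`:
`F x = f x / g x + (h₁ x - h₂ x)` on `Ω ∩ C` and `+∞` elsewhere. -/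
def Fobj (f g h₁ h₂ : En n → ℝ) (C : Set (En n)) (x : En n) : EReal :=
  if x ∈ Omeg g ∩ C then ((f x / g x + (h₁ x - h₂ x) : ℝ) : EReal) else ⊤

/-- The objective `F̃` of the min-max reformulation:
`F̃(x,c) = 2 c f x - c² f x g x + h x + ι_{Ω∩C}(x)`. -/
def Ftil (f g h₁ h₂ : En n → ℝ) (C : Set (En n)) (x : En n) (c : ℝ) : EReal :=
  if x ∈ Omeg g ∩ C then
    ((2 * c * f x - c ^ 2 * f x * g x + (h₁ x - h₂ x) : ℝ) : EReal) else ⊤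

/-- The Fréchet subdifferential of an extended-real-valued function on `ℝⁿ`. -/
def fsubdiff (φ : En n → EReal) (x : En n) : Set (En n) :=
  {y | φ x ≠ ⊤ ∧ ∀ ε : ℝ, 0 < ε →
      ∀ᶠ z in 𝓝 x, φ x + (((inner ℝ y (z - x) : ℝ) - ε * ‖z - x‖ : ℝ) : EReal) ≤ φ z}

/-- The convex (classical) subdifferential of a real-valued function on `ℝⁿ`. -/
def convSubdiff (φ : En n → ℝ) (x : En n) : Set (En n) :=
  {y | ∀ z, φ x + (inner ℝ y (z - x) : ℝ) ≤ φ z}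

/-- The convex subdifferential of an extended-real-valued function on `ℝⁿ`. -/
def eSubdiff (φ : En n → EReal) (x : En n) : Set (En n) :=
  {y | ∀ z, φ x + (((inner ℝ y (z - x) : ℝ)) : EReal) ≤ φ z}

/-- The convex conjugate of a real-valued function. -/
def conjF (φ : En n → ℝ) (y : En n) : EReal :=
  ⨆ x : En n, (((inner ℝ x y : ℝ) - φ x : ℝ) : EReal)

/-- The auxiliary function `Q`. -/
def Qaux (f g h₁ h₂ : En n → ℝ) (C : Set (En n)) (x y z : En n) (c : ℝ) : EReal :=
  if x ∈ C ∧ conjF g y ≠ ⊤ ∧ conjF h₂ z ≠ ⊤ then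
    ((2 * c * f x + c ^ 2 * f x * ((conjF g y).toReal - (inner ℝ x y : ℝ))
        + h₁ x + (conjF h₂ z).toReal - (inner ℝ x z : ℝ) : ℝ) : EReal)
  else ⊤

/-- The proximal operator (as a set) of `t • (f + ι_C)` at `v`. -/
def proxfC (f : En n → ℝ) (C : Set (En n)) (t : ℝ) (v : En n) : Set (En n) :=
  {z | z ∈ C ∧ ∀ w ∈ C, t * f z + ‖v - z‖ ^ 2 / 2 ≤ t * f w + ‖v - w‖ ^ 2 / 2}

/-- The standing assumptions on the data of problem (P). -/
def StandingAssumptions (f g h₁ h₂ : En n → ℝ) (C : Set (En n)) : Prop :=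
  (∀ x, 0 ≤ f x) ∧ (∀ x, 0 ≤ g x) ∧
  LowerSemicontinuous f ∧ LowerSemicontinuous g ∧
  LowerSemicontinuous (fun x => h₁ x - h₂ x) ∧
  IsClosed C ∧ (Omeg g ∩ C).Nonempty ∧
  (∀ x ∈ Omeg g, ∃ s ∈ 𝓝 x, ∃ K : NNReal, LipschitzOnWith K f s) ∧
  ConvexOn ℝ univ g ∧ ConvexOn ℝ univ h₂ ∧
  (∀ x ∈ Omeg g, ∃ δ > 0, (∀ y ∈ Metric.ball x δ, HasGradientAt h₁ (gradient h₁ y) y) ∧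
      ∃ K : NNReal, LipschitzOnWith K (gradient h₁) (Metric.ball x δ))

/-- An admissible run of the alternating maximization proximal descent algorithm (AMPDA),
including the backtracking line-search data: at iteration `k`, the trial points
`trial k j` are computed with stepsizes `αtil k * γ ^ j`, the trials `j < J k` fail the
acceptance test, and `x (k+1) = trial k (J k)` is accepted. -/
structure AMPDA (f g h₁ h₂ : En n → ℝ) (C : Set (En n)) (x0 : En n)
    (αlo αhi σ γ : ℝ) : Type where
  x : ℕ → En n
  y : ℕ → En n
  z : ℕ → En n
  c : ℕ → ℝ
  αtil : ℕ → ℝ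
  J : ℕ → ℕ
  trial : ℕ → ℕ → En n
  hx0 : x 0 = x0
  hc : ∀ k, c k = 1 / g (x k)
  hy : ∀ k, y k ∈ convSubdiff g (x k)
  hz : ∀ k, z k ∈ convSubdiff h₂ (x k)
  hαtil : ∀ k, αlo ≤ αtil k ∧ αtil k ≤ αhi
  htrial : ∀ k j, trial k j ∈ proxfC f C (αtil k * γ ^ j * c k)
      (x k - (αtil k * γ ^ j) • (gradient h₁ (x k) - z k - (c k ^ 2 * f (x k)) • y k))
  hfail : ∀ k, ∀ j < J k, ¬ (trial k j ∈ Omeg g ∧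
      Qaux f g h₁ h₂ C (trial k j) (y k) (z k) (1 / g (trial k j))
          + ((σ / 2 * ‖trial k j - x k‖ ^ 2 : ℝ) : EReal)
        ≤ Fobj f g h₁ h₂ C (x k))
  hstep : ∀ k, x (k + 1) = trial k (J k)
  hmem : ∀ k, x (k + 1) ∈ Omeg g
  haccept : ∀ k,
      Qaux f g h₁ h₂ C (x (k + 1)) (y k) (z k) (1 / g (x (k + 1)))
          + ((σ / 2 * ‖x (k + 1) - x k‖ ^ 2 : ℝ) : EReal)
        ≤ Fobj f g h₁ h₂ C (x k)

/-- The accepted stepsize `α_k` of AMPDA at iteration `k`. -/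
def AMPDA.step {f g h₁ h₂ : En n → ℝ} {C : Set (En n)} {x0 : En n} {αlo αhi σ γ : ℝ}
    (A : AMPDA f g h₁ h₂ C x0 αlo αhi σ γ) (k : ℕ) : ℝ := A.αtil k * γ ^ A.J k

/-- `x⋆` is a critical point of `F`. -/
def isCriticalPt (f g h₁ h₂ : En n → ℝ) (C : Set (En n)) (xs : En n) : Prop :=
  g xs ≠ 0 ∧
  ∃ u ∈ fsubdiff (fun x : En n => if x ∈ C then (((1 / g xs) * f x : ℝ) : EReal) else ⊤) xs,
  ∃ ys ∈ convSubdiff g xs, ∃ zs ∈ convSubdiff h₂ xs,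
    (0 : En n) = u - ((1 / g xs) ^ 2 * f xs) • ys + gradient h₁ xs - zs

/-- `xb` is an `ε`-critical point of `F`. -/
def epsCrit (f g h₁ h₂ : En n → ℝ) (C : Set (En n)) (ε : ℝ) (xb : En n) : Prop :=
  g xb ≠ 0 ∧ ∃ α : ℝ, 0 < α ∧ ∃ yb ∈ convSubdiff g xb, ∃ zb ∈ convSubdiff h₂ xb,
    (proxfC f C (α * (1 / g xb))
        (xb - α • (gradient h₁ xb - zb - ((1 / g xb) ^ 2 * f xb) • yb))).Nonempty ∧
    Metric.infDist xb (proxfC f C (α * (1 / g xb))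
        (xb - α • (gradient h₁ xb - zb - ((1 / g xb) ^ 2 * f xb) • yb))) ≤ ε

/-- The product space `ℝⁿ × ℝⁿ × ℝⁿ × ℝ` on which `Q` lives. -/
abbrev E4 (n : ℕ) := En n × En n × En n × ℝ

/-- The natural inner product on `ℝⁿ × ℝⁿ × ℝⁿ × ℝ`. -/
def inner4 (v w : E4 n) : ℝ :=
  (inner ℝ v.1 w.1 : ℝ) + (inner ℝ v.2.1 w.2.1 : ℝ) + (inner ℝ v.2.2.1 w.2.2.1 : ℝ)
    + v.2.2.2 * w.2.2.2

/-- The Fréchet subdifferential of an extended-real-valued function on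
`ℝⁿ × ℝⁿ × ℝⁿ × ℝ`. -/
def fsubdiff4 (φ : E4 n → EReal) (w : E4 n) : Set (E4 n) :=
  {v | φ w ≠ ⊤ ∧ ∀ ε : ℝ, 0 < ε →
      ∀ᶠ u in 𝓝 w, φ w + ((inner4 v (u - w) - ε * ‖u - w‖ : ℝ) : EReal) ≤ φ u}

/-- The limiting subdifferential of an extended-real-valued function on
`ℝⁿ × ℝⁿ × ℝⁿ × ℝ`. -/
def lsubdiff4 (φ : E4 n → EReal) (w : E4 n) : Set (E4 n) :=
  {v | ∃ (u : ℕ → E4 n) (q : ℕ → E4 n), Tendsto u atTop (𝓝 w) ∧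
      Tendsto (fun k => φ (u k)) atTop (𝓝 (φ w)) ∧ Tendsto q atTop (𝓝 v) ∧
      ∀ k, q k ∈ fsubdiff4 φ (u k)}

/-- The function `Q` as a function on the product space. -/
def QfunOf (f g h₁ h₂ : En n → ℝ) (C : Set (En n)) : E4 n → EReal :=
  fun w => Qaux f g h₁ h₂ C w.1 w.2.1 w.2.2.1 w.2.2.2

/-- The Kurdyka-Łojasiewicz property of `φ` at `w`. -/
def KLAt4 (φ : E4 n → EReal) (w : E4 n) : Prop :=
  ∃ ε : EReal, 0 < ε ∧ ∃ δ : ℝ, 0 < δ ∧ ∃ ψ ψ' : ℝ → ℝ,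
    ψ 0 = 0 ∧
    ContinuousOn ψ {t : ℝ | 0 ≤ t ∧ (t : EReal) < ε} ∧
    ConcaveOn ℝ {t : ℝ | 0 ≤ t ∧ (t : EReal) < ε} ψ ∧
    (∀ t : ℝ, 0 < t → (t : EReal) < ε → HasDerivAt ψ (ψ' t) t ∧ 0 < ψ' t) ∧
    ∀ u : E4 n, ‖u - w‖ < δ → φ w < φ u → φ u < φ w + ε →
      ∀ p ∈ lsubdiff4 φ u, 1 ≤ ψ' ((φ u - φ w).toReal) * ‖p‖

/-- The ℓ¹-norm on `ℝⁿ`. -/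
def l1 (x : En n) : ℝ := ∑ i, |x i|

/-- The ℓ²-norm on `ℝⁿ`. -/
def l2 (x : En n) : ℝ := ‖x‖

/-- `S_μ`, the set of vectors with at most `μ` nonzero entries. -/
def Smu (μ : ℕ) : Set (En n) := {z | {j | z j ≠ 0}.ncard ≤ μ}

/-- `h₁` for the robust signal recovery models: `(λ/2) ‖A x - b‖²`. -/
def h1L {m : ℕ} (A : En n →ₗ[ℝ] En m) (b : En m) (lam : ℝ) (x : En n) : ℝ :=
  lam / 2 * ‖A x - b‖ ^ 2

/-- `h₂` for the robust signal recovery models: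
`(λ/2) ‖T_μ (A x - b)‖² = (λ/2) (‖A x - b‖² - dist²(A x - b, S_μ))`. -/
def h2L {m : ℕ} (A : En n →ₗ[ℝ] En m) (b : En m) (lam : ℝ) (μ : ℕ) (x : En n) : ℝ :=
  lam / 2 * (‖A x - b‖ ^ 2 - (Metric.infDist (A x - b) (Smu μ)) ^ 2)

/-- The box constraint `{x : x̲ ≤ x ≤ x̄}`. -/
def box (xlo xhi : En n) : Set (En n) := {x | ∀ i, xlo i ≤ x i ∧ x i ≤ xhi i}

theorem le_conjF (φ : En n → ℝ) (x y : En n) :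
    (((inner ℝ x y : ℝ) - φ x : ℝ) : EReal) ≤ conjF φ y :=
  le_iSup (fun w : En n => (((inner ℝ w y : ℝ) - φ w : ℝ) : EReal)) x

theorem inner_sub_le_toReal_conjF {φ : En n → ℝ} {y : En n} (hy : conjF φ y ≠ ⊤) (x : En n) :
    (inner ℝ x y : ℝ) - φ x ≤ (conjF φ y).toReal := by
  simpa only [EReal.toReal_coe] using
    EReal.toReal_le_toReal (le_conjF φ x y) (EReal.coe_ne_bot _) hy

/-- Fenchel–Young equality: a subgradient attains the supremum defining the conjugate. -/
theorem conjF_eq_of_mem_convSubdiff {φ : En n → ℝ} {x y : En n} (hy : y ∈ convSubdiff φ x) :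
    conjF φ y = (((inner ℝ x y : ℝ) - φ x : ℝ) : EReal) := by
  refine le_antisymm (iSup_le fun w => EReal.coe_le_coe_iff.mpr ?_) (le_conjF φ x y)
  have hsub := hy w
  rw [inner_sub_right, real_inner_comm w y, real_inner_comm x y] at hsub
  linarith

theorem Fobj_eq_Ftil_one_div {f g h₁ h₂ : En n → ℝ} {C : Set (En n)} {x : En n}
    (hx : x ∈ Omeg g ∩ C) :
    Fobj f g h₁ h₂ C x = Ftil f g h₁ h₂ C x (1 / g x) := by
  have hg : g x ≠ 0 := hx.1
  rw [Fobj, Ftil, if_pos hx, if_pos hx, EReal.coe_eq_coe_iff]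
  field_simp
  ring

theorem Ftil_le_Qaux {f g h₁ h₂ : En n → ℝ} {C : Set (En n)} {x y z : En n} (c : ℝ)
    (hf : 0 ≤ f x) (hx : x ∈ Omeg g ∩ C) (hy : conjF g y ≠ ⊤) (hz : conjF h₂ z ≠ ⊤) :
    Ftil f g h₁ h₂ C x c ≤ Qaux f g h₁ h₂ C x y z c := by
  rw [Ftil, Qaux, if_pos hx, if_pos ⟨hx.2, hy, hz⟩, EReal.coe_le_coe_iff]
  have hgy := inner_sub_le_toReal_conjF hy x
  have hhz := inner_sub_le_toReal_conjF hz x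
  nlinarith [mul_nonneg (mul_nonneg (sq_nonneg c) hf) (sub_nonneg.mpr hgy)]

theorem Qaux_eq_Ftil_of_mem_convSubdiff {f g h₁ h₂ : En n → ℝ} {C : Set (En n)} {x y z : En n}
    (c : ℝ) (hx : x ∈ Omeg g ∩ C) (hy : y ∈ convSubdiff g x) (hz : z ∈ convSubdiff h₂ x) :
    Qaux f g h₁ h₂ C x y z c = Ftil f g h₁ h₂ C x c := by
  have hgy := conjF_eq_of_mem_convSubdiff hy
  have hhz := conjF_eq_of_mem_convSubdiff hz
  rw [Ftil, Qaux, if_pos hx,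
    if_pos ⟨hx.2, hgy ▸ EReal.coe_ne_top _, hhz ▸ EReal.coe_ne_top _⟩, hgy, hhz, EReal.toReal_coe, EReal.toReal_coe, EReal.coe_eq_coe_iff]
  ring

/-- for `x ∈ Ω ∩ C`, `(y,z) ∈ dom g* × dom h₂*` and `c_x = 1/g(x)`, one has
`F(x) = F̃(x, c_x) ≤ Q(x, y, z, c_x)`, with equality when `(y,z) ∈ ∂g(x) × ∂h₂(x)`. -/
theorem statement11 (f g h₁ h₂ : En n → ℝ) (C : Set (En n))
    (hSA : StandingAssumptions f g h₁ h₂ C)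
    (x y z : En n) (hx : x ∈ Omeg g ∩ C)
    (hy : conjF g y ≠ ⊤) (hz : conjF h₂ z ≠ ⊤) :
    Fobj f g h₁ h₂ C x = Ftil f g h₁ h₂ C x (1 / g x) ∧
    Ftil f g h₁ h₂ C x (1 / g x) ≤ Qaux f g h₁ h₂ C x y z (1 / g x) ∧
    (y ∈ convSubdiff g x → z ∈ convSubdiff h₂ x →
      Fobj f g h₁ h₂ C x = Qaux f g h₁ h₂ C x y z (1 / g x)) :=
  ⟨Fobj_eq_Ftil_one_div hx, Ftil_le_Qaux _ (hSA.1 x) hx hy hz, fun hyg hzh =>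
    (Fobj_eq_Ftil_one_div hx).trans (Qaux_eq_Ftil_of_mem_convSubdiff _ hx hyg hzh).symm⟩

end
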